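/- For every natural number m, ∑_{(q_1,…,q_m) ∈ W_m^m} ∏_{l=1}^{m} C₀(l−∑_{i=1}^{l−1} q_i, q_l) = m!. -/

import Mathlib

/-!
Generalize by an offset `c`: with `W(q) = ∏ₗ C₀(l + c + 1 - ∑_{i<l} qᵢ, q_l)` (parts indexed
from `0`), the sum of `W` over weak compositions of `m + c` into `m` parts is `m ^ c * m!`.
For `m + 1` parts, fixing the first part `q₀ = p` contributes the factor `C(c + 1, p)` and leaves
the same kind of sum with `m` parts and offset `c + 1 - p`, so by induction the sum is
`∑ₚ C(c + 1, p) m ^ (c + 1 - p) m! = (m + 1) ^ (c + 1) m! = (m + 1) ^ c (m + 1)!`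
by the binomial theorem. The case `c = 0` is the theorem.
-/

/-- `C₀(a,b)`: binomial coefficient `a choose b` for an integer `a` and natural `b`,
with the convention that it vanishes whenever `a < 0` (and also when `b > a`). -/
def C0 (a : ℤ) (b : ℕ) : ℕ := if 0 ≤ a then a.toNat.choose b else 0

open Finset

theorem Finset.Nat.sum_antidiagonalTuple_succ {M : Type*} [AddCommMonoid M] (k n : ℕ)
    (f : (Fin (k + 1) → ℕ) → M) :
    ∑ q ∈ Nat.antidiagonalTuple (k + 1) n, f q =
      ∑ p ∈ antidiagonal n, ∑ r ∈ Nat.antidiagonalTuple k p.2, f (Fin.cons p.1 r) := by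
  change _ = (Multiset.map _ (List.Nat.antidiagonal n : Multiset (ℕ × ℕ))).sum
  simp only [Finset.sum, Nat.antidiagonalTuple, Multiset.Nat.antidiagonalTuple,
    List.Nat.antidiagonalTuple, Multiset.map_coe, Multiset.sum_coe, List.flatMap, List.map_flatten,
    List.sum_flatten, List.map_map, Function.comp_def]

theorem Fin.sum_Iio_succ {M : Type*} [AddCommMonoid M] {n : ℕ} (f : Fin (n + 1) → M)
    (l : Fin n) : ∑ i ∈ Iio l.succ, f i = f 0 + ∑ i ∈ Iio l, f i.succ := by
  rw [show Iio l.succ = Ico 0 l.succ from rfl, ← Ioo_insert_left l.succ_pos, sum_insert (by simp),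
    ← Fin.map_succEmb_Iio, sum_map]
  rfl

theorem C0_natCast (n b : ℕ) : C0 n b = n.choose b := by
  simp [C0]

def compositionWeight (a : ℤ) {m : ℕ} (q : Fin m → ℕ) : ℕ :=
  ∏ l : Fin m, C0 ((l : ℤ) + a - ∑ i ∈ Iio l, (q i : ℤ)) (q l)

theorem compositionWeight_cons (a : ℤ) {m : ℕ} (p : ℕ) (r : Fin m → ℕ) :
    compositionWeight a (Fin.cons p r : Fin (m + 1) → ℕ) =
      C0 a p * compositionWeight (a + 1 - p) r := by
  rw [compositionWeight, Fin.prod_univ_succ]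
  congr 1
  · simp [show Iio (0 : Fin (m + 1)) = ∅ from Iio_bot]
  · refine prod_congr rfl fun l _ => ?_
    rw [Fin.sum_Iio_succ]
    simp only [Fin.cons_zero, Fin.cons_succ, Fin.val_succ]
    congr 1
    push_cast
    ring

theorem sum_compositionWeight_antidiagonalTuple (m c : ℕ) :
    ∑ q ∈ Nat.antidiagonalTuple m (m + c), compositionWeight (c + 1) q = m ^ c * m.factorial := by
  induction m generalizing c with
  | zero => cases c <;> simp [compositionWeight]
  | succ m ih =>
    have sum_cons (p : ℕ) : ∑ r ∈ Nat.antidiagonalTuple m (m + 1 + c - p),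
        compositionWeight (c + 1) (Fin.cons p r : Fin (m + 1) → ℕ) =
          (c + 1).choose p * (m ^ (c + 1 - p) * m.factorial) := by
      have hC0 : C0 (c + 1) p = (c + 1).choose p := by exact_mod_cast C0_natCast (c + 1) p
      simp_rw [compositionWeight_cons, ← mul_sum, hC0]
      rcases le_or_gt p (c + 1) with hp | hp
      · have hoff : (c : ℤ) + 1 + 1 - p = (c + 1 - p : ℕ) + 1 := by push_cast [hp]; ring
        rw [show m + 1 + c - p = m + (c + 1 - p) by omega, hoff, ih]
      · simp [Nat.choose_eq_zero_of_lt hp]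
    calc ∑ q ∈ Nat.antidiagonalTuple (m + 1) (m + 1 + c), compositionWeight (c + 1) q
        = ∑ p ∈ range (m + 1 + c + 1), (c + 1).choose p * (m ^ (c + 1 - p) * m.factorial) := by
          rw [Nat.sum_antidiagonalTuple_succ, Nat.sum_antidiagonal_eq_sum_range_succ_mk]
          exact sum_congr rfl fun p _ => sum_cons p
      _ = ∑ p ∈ range (c + 1 + 1), (c + 1).choose p * (m ^ (c + 1 - p) * m.factorial) := by
          refine (sum_subset (range_subset_range.2 (by omega)) fun p _ hp => ?_).symm
          rw [Nat.choose_eq_zero_of_lt (by simpa using hp), zero_mul]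
      _ = (m + 1) ^ (c + 1) * m.factorial := by
          rw [add_comm m, add_pow, sum_mul]
          refine sum_congr rfl fun p _ => ?_
          rw [one_pow, Nat.cast_id]
          ring
      _ = (m + 1) ^ c * (m + 1).factorial := by
          rw [Nat.factorial_succ]
          ring

/-- For every natural `m`, summing over weak compositions of `m`
into `m` parts: `∑_{(q₁,…,q_m) ∈ W_m^m} ∏_{l=1}^{m} C₀(l-∑_{i<l} qᵢ, q_l) = m!`. -/
theorem sum_weak_comp_binomial_eq_factorial' (m : ℕ) :
    ∑ q ∈ Finset.Nat.antidiagonalTuple m m,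
      ∏ l : Fin m, C0 ((l : ℤ) + 1 - ∑ i ∈ Finset.Iio l, (q i : ℤ)) (q l)
      = m.factorial := by
  simpa [compositionWeight] using sum_compositionWeight_antidiagonalTuple m 0
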